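/- arXiv:1302.2316 — 4 statements merged into one kernel-verified Lean document; each statement's English description precedes it below -/
import Mathlib

section
/- Let L be a unimodular lattice and σ an involution of L. Then the lattices L^σ and L_σ are both 2-elementary, i.e., their discriminant groups (L^σ)*/L^σ and (L_σ)*/(L_σ) are 2-elementary abelian groups. -/
/-- Reinterpret an additive hom as a `ℤ`-linear map with respect to *specified*
`ℤ`-module structures (all `ℤ`-module structures on an `AddCommGroup` agree). -/
def intLinearOf {M N : Type*} [AddCommGroup M] [AddCommGroup N]
    {iM : Module ℤ M} {iN : Module ℤ N} (g : M →+ N) :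
    @LinearMap ℤ ℤ Int.instSemiring Int.instSemiring (RingHom.id ℤ) M N _ _ iM iN where
  toFun := g
  map_add' := g.map_add
  map_smul' := fun c x => by
    have hM := @Int.cast_smul_eq_zsmul ℤ M _ _ iM c x
    have hN := @Int.cast_smul_eq_zsmul ℤ N _ _ iN c (g x)
    rw [Int.cast_id] at hM hN
    rw [RingHom.id_apply, hM, hN]
    exact map_zsmul g c x

@[simp] lemma intLinearOf_apply {M N : Type*} [AddCommGroup M] [AddCommGroup N]
    {iM : Module ℤ M} {iN : Module ℤ N} (g : M →+ N) (x : M) :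
    intLinearOf (iM := iM) (iN := iN) g x = g x := rfl

/-- Auxiliary extension lemma over a general PID: if `M` is the fixed submodule of an
isometric involution `σ` of a unimodular lattice `L`, then every functional `f` on `M`
has `2f` represented by an element of `M` via the restricted bilinear form. -/
lemma aux_ext {R : Type*} [CommRing R] [IsDomain R] [IsPrincipalIdealRing R]
    (L : Type*) [AddCommGroup L] [Module R L]
    [Module.Free R L] [Module.Finite R L]
    (B : L →ₗ[R] L →ₗ[R] R)
    (hunimodular : Function.Bijective (fun x : L => (B x : Module.Dual R L)))
    (σ : L ≃ₗ[R] L)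
    (hisom : ∀ x y, B (σ x) (σ y) = B x y)
    (hinv : ∀ x, σ (σ x) = x)
    (M : Submodule R L)
    (hM : ∀ x, x ∈ M ↔ σ x = x)
    (f : ↥M →ₗ[R] R) : ∃ z : ↥M, ∀ x : ↥M, B z x = f x + f x := by
  -- L/M is torsion-free
  haveI : NoZeroSMulDivisors R (L ⧸ M) := by
    constructor
    intro c x h
    by_cases hc : c = 0
    · exact Or.inl hc
    · right
      obtain ⟨y, rfl⟩ := Submodule.Quotient.mk_surjective M x
      rw [← Submodule.Quotient.mk_smul, Submodule.Quotient.mk_eq_zero] at h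
      rw [Submodule.Quotient.mk_eq_zero]
      rw [hM] at h ⊢
      have : c • σ y = c • y := by rw [← map_smul σ]; exact h
      exact smul_right_injective L hc this
  haveI : Module.Free R (L ⧸ M) := Module.free_of_finite_type_torsion_free'
  -- split the quotient map
  obtain ⟨s, hs⟩ := Module.projective_lifting_property M.mkQ (LinearMap.id)
    (Submodule.mkQ_surjective M)
  -- π x = x - s (mkQ x) lands in M
  have hπmem : ∀ x : L, x - s (M.mkQ x) ∈ M := by
    intro x
    rw [← Submodule.Quotient.mk_eq_zero, ← Submodule.mkQ_apply, map_sub]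
    have := LinearMap.congr_fun hs (M.mkQ x)
    simp only [LinearMap.comp_apply, LinearMap.id_apply] at this
    rw [this, sub_self]
  set π := LinearMap.codRestrict M (LinearMap.id - s ∘ₗ M.mkQ) (fun x => hπmem x) with hπ
  have hπfix : ∀ x : ↥M, π (x : L) = x := by
    intro x
    apply Subtype.ext
    simp only [hπ, LinearMap.codRestrict_apply, LinearMap.sub_apply, LinearMap.id_apply,
      LinearMap.comp_apply]
    have : M.mkQ (x : L) = 0 := by
      rw [Submodule.mkQ_apply, Submodule.Quotient.mk_eq_zero]; exact x.2
    rw [this, map_zero, sub_zero]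
  -- extend f to L via π, then use unimodularity
  obtain ⟨z, hz⟩ := hunimodular.2 (f ∘ₗ π)
  have hz' : ∀ y : L, B z y = f (π y) := fun y => LinearMap.congr_fun hz y
  -- z + σ z lies in M
  have hw : z + σ z ∈ M := by
    rw [hM, map_add, hinv, add_comm]
  refine ⟨⟨z + σ z, hw⟩, fun x => ?_⟩
  have hx : σ (x : L) = x := (hM x).1 x.2
  have h1 : B (σ z) (x : L) = B z x := by
    conv_lhs => rw [← hx]
    exact hisom z x
  show B (z + σ z) (x : L) = f x + f x
  rw [map_add, LinearMap.add_apply, h1, hz' (x : L), hπfix x]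

/-- For a unimodular lattice `L` with an isometric involution `σ`, the
sublattices `L^σ` and `L_σ` are 2-elementary: their discriminant groups
`(L^σ)*/L^σ` and `(L_σ)*/L_σ` are 2-elementary abelian groups.  Here the
discriminant group of a sublattice `M` is realized as the quotient of the dual
`M* = Hom(M, ℤ)` by the image of `M` under `x ↦ (x, −)` (the restricted form). -/
theorem stmt_3 (L : Type) [AddCommGroup L] [Module ℤ L]
    [Module.Free ℤ L] [Module.Finite ℤ L]
    (B : L →ₗ[ℤ] L →ₗ[ℤ] ℤ)
    (hsymm : ∀ x y, B x y = B y x)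
    (hnd : ∀ x, (∀ y, B x y = 0) → x = 0)
    (hunimodular : Function.Bijective (fun x : L => (B x : Module.Dual ℤ L)))
    (σ : L ≃ₗ[ℤ] L)
    (hisom : ∀ x y, B (σ x) (σ y) = B x y)
    (hinv : ∀ x, σ (σ x) = x)
    (Lp Lm : Submodule ℤ L)
    (hLp : ∀ x, x ∈ Lp ↔ σ x = x)
    (hLm : ∀ x, x ∈ Lm ↔ σ x = -x)
    (Bp : ↥Lp →ₗ[ℤ] ↥Lp →ₗ[ℤ] ℤ)
    (hBp : ∀ x y : ↥Lp, Bp x y = B x y)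
    (Bm : ↥Lm →ₗ[ℤ] ↥Lm →ₗ[ℤ] ℤ)
    (hBm : ∀ x y : ↥Lm, Bm x y = B x y) :
    (∀ a : (↥Lp →ₗ[ℤ] ℤ) ⧸ LinearMap.range Bp, 2 • a = 0) ∧
    (∀ a : (↥Lm →ₗ[ℤ] ℤ) ⧸ LinearMap.range Bm, 2 • a = 0) := by
  constructor
  · intro a
    obtain ⟨f, rfl⟩ := Submodule.Quotient.mk_surjective _ a
    obtain ⟨z, hz⟩ := aux_ext L B hunimodular σ hisom hinv Lp hLp
      (intLinearOf f.toAddMonoidHom)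
    have key : Bp z = f + f := by
      ext x
      rw [hBp, hz x]
      rfl
    have h2 : (2 : ℕ) • f = f + f := two_smul ℕ f
    have : (2 : ℕ) • (Submodule.Quotient.mk f :
        (↥Lp →ₗ[ℤ] ℤ) ⧸ LinearMap.range Bp) = Submodule.Quotient.mk ((2 : ℕ) • f) := rfl
    rw [this, h2, Submodule.Quotient.mk_eq_zero]
    exact ⟨z, key⟩
  · intro a
    obtain ⟨f, rfl⟩ := Submodule.Quotient.mk_surjective _ a
    set τ : L ≃ₗ[ℤ] L := σ.trans (LinearEquiv.neg ℤ) with hτ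
    have hτapp : ∀ x, τ x = -σ x := fun x => rfl
    have hisom' : ∀ x y, B (τ x) (τ y) = B x y := by
      intro x y
      simp only [hτapp, map_neg, LinearMap.neg_apply, neg_neg]
      exact hisom x y
    have hinv' : ∀ x, τ (τ x) = x := by
      intro x
      rw [hτapp, hτapp, map_neg, neg_neg]
      exact hinv x
    have hLm' : ∀ x, x ∈ Lm ↔ τ x = x := by
      intro x
      rw [hLm, hτapp, neg_eq_iff_eq_neg]
    obtain ⟨z, hz⟩ := aux_ext L B hunimodular τ hisom' hinv' Lm hLm'
      (intLinearOf f.toAddMonoidHom)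
    have key : Bm z = f + f := by
      ext x
      rw [hBm, hz x]
      rfl
    have h2 : (2 : ℕ) • f = f + f := two_smul ℕ f
    have : (2 : ℕ) • (Submodule.Quotient.mk f :
        (↥Lm →ₗ[ℤ] ℤ) ⧸ LinearMap.range Bm) = Submodule.Quotient.mk ((2 : ℕ) • f) := rfl
    rw [this, h2, Submodule.Quotient.mk_eq_zero]
    exact ⟨z, key⟩
end

section
/- Let M be a non-degenerate even lattice and N an overlattice of M. Then l(A_N) ≥ l(A_M) − 2·l(N/M), where l denotes the minimal number of generators of a finite abelian group. -/
/-!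
Let `A_M = M^∨ / BM(M)`. The classes of the functionals `B x|_M`, `x ∈ N`, form a subgroup `Q` of
`A_M` which is a quotient of `N/M`. The image of `N^∨` in `A_M / Q` under restriction is a quotient
of `A_N = N^∨ / B(N)`, since `B(N)` restricts into `Q`. What remains is a quotient of the cokernel
`M^∨ / N^∨|_M` of restriction, and a Smith normal form basis for `M ⊆ N` exhibits that cokernel as
a quotient of `N/M`. As `l` does not increase under quotients and is subadditive in extensions,
`l(A_M) ≤ l(N/M) + l(A_N) + l(N/M)`.
-/

-- This is `0` for a group that is not finitely generated, since `sInf ∅ = 0`.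
noncomputable def minGen (A : Type) [AddCommGroup A] : ℕ :=
  sInf {n | ∃ s : Finset A, s.card = n ∧ AddSubgroup.closure (s : Set A) = ⊤}

open Submodule LinearMap

section minGen

variable {A B : Type} [AddCommGroup A] [AddCommGroup B]

lemma minGen_le_card {s : Finset A} (hs : AddSubgroup.closure (s : Set A) = ⊤) :
    minGen A ≤ s.card :=
  Nat.sInf_le ⟨s, rfl, hs⟩

lemma exists_card_eq_minGen_closure_eq_top [AddGroup.FG A] :
    ∃ s : Finset A, s.card = minGen A ∧ AddSubgroup.closure (s : Set A) = ⊤ := by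
  obtain ⟨s, hs⟩ := AddGroup.fg_def.mp ‹AddGroup.FG A›
  exact Nat.sInf_mem
    (s := {n | ∃ s : Finset A, s.card = n ∧ AddSubgroup.closure (s : Set A) = ⊤}) ⟨_, s, rfl, hs⟩

lemma minGen_le_of_surjective [AddGroup.FG A] (f : A →+ B) (hf : Function.Surjective f) :
    minGen B ≤ minGen A := by
  classical
  obtain ⟨s, hs, hclosure⟩ := exists_card_eq_minGen_closure_eq_top (A := A)
  calc minGen B ≤ (s.image f).card := minGen_le_card <| by
        rw [Finset.coe_image, ← AddMonoidHom.map_closure, hclosure,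
          AddSubgroup.map_top_of_surjective f hf]
    _ ≤ minGen A := hs ▸ Finset.card_image_le

instance Submodule.Quotient.addGroupFG {R : Type*} [Ring R] [Module R A] [AddGroup.FG A]
    (p : Submodule R A) : AddGroup.FG (A ⧸ p) :=
  AddGroup.fg_of_surjective (f := p.mkQ.toAddMonoidHom) p.mkQ_surjective

lemma minGen_le_add_minGen_quotient_range {R : Type*} [Ring R] [Module R A] [Module R B]
    (f : A →ₗ[R] B) [AddGroup.FG A] [AddGroup.FG (B ⧸ range f)] :
    minGen B ≤ minGen A + minGen (B ⧸ range f) := by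
  classical
  obtain ⟨s, hs, hclosure_s⟩ := exists_card_eq_minGen_closure_eq_top (A := A)
  obtain ⟨t, ht, hclosure_t⟩ := exists_card_eq_minGen_closure_eq_top (A := B ⧸ range f)
  let φ := f.toAddMonoidHom
  let π := (range f).mkQ.toAddMonoidHom
  let σ := Function.surjInv (range f).mkQ_surjective
  have hπσ : π ∘ σ = id := (Function.rightInverse_surjInv (range f).mkQ_surjective).comp_eq_id
  have hker : π.ker = AddSubgroup.closure (φ '' s) := by
    rw [← LinearMap.ker_toAddSubgroup, ker_mkQ, range_toAddSubgroup, ← AddMonoidHom.map_closure,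
      hclosure_s, AddMonoidHom.range_eq_map]
  have hlift : (AddSubgroup.closure (σ '' t)).map π = (⊤ : AddSubgroup B).map π := by
    rw [AddMonoidHom.map_closure, ← Set.image_comp, hπσ, Set.image_id, hclosure_t,
      AddSubgroup.map_top_of_surjective π (range f).mkQ_surjective]
  have hclosure : AddSubgroup.closure ((s.image φ ∪ t.image σ : Finset B) : Set B) = ⊤ := by
    rw [Finset.coe_union, Finset.coe_image, Finset.coe_image, AddSubgroup.closure_union,
      ← hker, sup_comm, AddSubgroup.map_eq_map_iff.mp hlift, top_sup_eq]
  calc minGen B ≤ (s.image φ ∪ t.image σ).card := minGen_le_card hclosure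
    _ ≤ (s.image φ).card + (t.image σ).card := Finset.card_union_le _ _
    _ ≤ minGen A + minGen (B ⧸ range f) :=
        hs ▸ ht ▸ add_le_add Finset.card_image_le Finset.card_image_le

end minGen

section Lattice

variable {R N : Type} [CommRing R] [AddCommGroup N] [Module R N]
  [Module.Free R N] [Module.Finite R N]

instance Module.Dual.addGroupFG [AddGroup.FG N] : AddGroup.FG (Module.Dual R N) := by
  classical
  exact AddGroup.fg_of_surjective
    (f := (Module.Free.chooseBasis R N).toDualEquiv.toLinearMap.toAddMonoidHom)
    (Module.Free.chooseBasis R N).toDualEquiv.surjective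

variable [IsDomain R] [IsPrincipalIdealRing R]

lemma Submodule.exists_surjective_map_le_range_dualMap_subtype (M : Submodule R N) :
    ∃ g : N →ₗ[R] Module.Dual R M,
      Function.Surjective g ∧ M.map g ≤ range M.subtype.dualMap := by
  classical
  -- Mathlib's names are swapped relative to ours: `snf.bM` is a basis of `N`, `snf.bN` one of `M`.
  obtain ⟨n, snf⟩ := M.smithNormalForm (Module.Free.chooseBasis R N)
  let g : N →ₗ[R] Module.Dual R M :=
    ∑ i, (snf.bM.coord (snf.f i)).smulRight (snf.bN.coord i)
  have hg_bM (i : Fin n) : g (snf.bM (snf.f i)) = snf.bN.coord i := by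
    simp [g, Finsupp.single_apply, snf.f.injective.eq_iff]
  have hg_bN (i : Fin n) : g (snf.bN i) = M.subtype.dualMap (snf.bM.coord (snf.f i)) := by
    refine snf.bN.ext fun j => ?_
    by_cases h : j = i <;> simp [g, snf.snf, Finsupp.single_apply, snf.f.injective.eq_iff, h]
  refine ⟨g, ?_, ?_⟩
  · rw [← range_eq_top, eq_top_iff, ← snf.bN.dualBasis.span_eq, span_le]
    rintro _ ⟨i, rfl⟩
    exact ⟨_, by rw [hg_bM, Module.Basis.coe_dualBasis]⟩
  · rw [map_le_iff_le_comap, ← comap_subtype_eq_top, eq_top_iff, ← snf.bN.span_eq, span_le]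
    rintro _ ⟨i, rfl⟩
    exact ⟨_, (hg_bN i).symm⟩

instance Submodule.dual_addGroupFG [AddGroup.FG N] (M : Submodule R N) :
    AddGroup.FG (Module.Dual R M) :=
  let ⟨g, hg, _⟩ := M.exists_surjective_map_le_range_dualMap_subtype
  AddGroup.fg_of_surjective (f := g.toAddMonoidHom) hg

lemma minGen_dual_quotient_range_dualMap_le [AddGroup.FG N] (M : Submodule R N) :
    minGen (Module.Dual R M ⧸ range M.subtype.dualMap) ≤ minGen (N ⧸ M) := by
  obtain ⟨g, hg, hgM⟩ := M.exists_surjective_map_le_range_dualMap_subtype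
  refine minGen_le_of_surjective (M.mapQ _ g (map_le_iff_le_comap.mp hgM)).toAddMonoidHom
    fun y => ?_
  obtain ⟨φ, rfl⟩ := mkQ_surjective _ y
  obtain ⟨x, rfl⟩ := hg φ
  exact ⟨M.mkQ x, rfl⟩

theorem minGen_discriminant_le [AddGroup.FG N] (B : N →ₗ[R] N →ₗ[R] R) (M : Submodule R N)
    (BM : M →ₗ[R] M →ₗ[R] R) (hBM : ∀ x y : M, BM x y = B x y) :
    minGen (Module.Dual R M ⧸ range BM) ≤
      minGen (Module.Dual R N ⧸ range B) + 2 * minGen (N ⧸ M) := by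
  let A := Module.Dual R M ⧸ range BM
  have hBM_dualMap (m : M) : BM m = M.subtype.dualMap (B m) := LinearMap.ext (hBM m)
  let ν : N ⧸ M →ₗ[R] A := M.liftQ ((range BM).mkQ ∘ₗ M.subtype.dualMap ∘ₗ B) fun m hm =>
    (Submodule.Quotient.mk_eq_zero _).mpr ⟨⟨m, hm⟩, hBM_dualMap ⟨m, hm⟩⟩
  let ρ : (Module.Dual R N ⧸ range B) →ₗ[R] A ⧸ range ν :=
    (range B).liftQ ((range ν).mkQ ∘ₗ (range BM).mkQ ∘ₗ M.subtype.dualMap) <| by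
      rintro _ ⟨x, rfl⟩
      exact (Submodule.Quotient.mk_eq_zero _).mpr ⟨M.mkQ x, rfl⟩
  let π : (Module.Dual R M ⧸ range M.subtype.dualMap) →ₗ[R] (A ⧸ range ν) ⧸ range ρ :=
    (range _).liftQ ((range ρ).mkQ ∘ₗ (range ν).mkQ ∘ₗ (range BM).mkQ) <| by
      rintro _ ⟨φ, rfl⟩
      exact (Submodule.Quotient.mk_eq_zero _).mpr ⟨(range B).mkQ φ, rfl⟩
  have hπ : Function.Surjective π := fun y => by
    obtain ⟨φ, rfl⟩ := ((mkQ_surjective _).comp ((mkQ_surjective _).comp (mkQ_surjective _))) y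
    exact ⟨(range _).mkQ φ, rfl⟩
  calc minGen A ≤ minGen (N ⧸ M) + minGen (A ⧸ range ν) :=
        minGen_le_add_minGen_quotient_range ν
    _ ≤ minGen (N ⧸ M) + (minGen (Module.Dual R N ⧸ range B) +
          minGen ((A ⧸ range ν) ⧸ range ρ)) := by
        gcongr; exact minGen_le_add_minGen_quotient_range ρ
    _ ≤ minGen (N ⧸ M) + (minGen (Module.Dual R N ⧸ range B) +
          minGen (Module.Dual R M ⧸ range M.subtype.dualMap)) := by
        gcongr; exact minGen_le_of_surjective π.toAddMonoidHom hπ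
    _ ≤ minGen (N ⧸ M) + (minGen (Module.Dual R N ⧸ range B) + minGen (N ⧸ M)) := by
        gcongr; exact minGen_dual_quotient_range_dualMap_le M
    _ = minGen (Module.Dual R N ⧸ range B) + 2 * minGen (N ⧸ M) := by ring

end Lattice

theorem stmt_7_general (N : Type) [AddCommGroup N] [Module ℤ N]
    [Module.Free ℤ N] [Module.Finite ℤ N]
    (B : N →ₗ[ℤ] N →ₗ[ℤ] ℤ)
    (M : Submodule ℤ N)
    (BM : ↥M →ₗ[ℤ] ↥M →ₗ[ℤ] ℤ)
    (hBM : ∀ x y : ↥M, BM x y = B x y) :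
    minGen ((↥M →ₗ[ℤ] ℤ) ⧸ LinearMap.range BM) ≤
      minGen ((N →ₗ[ℤ] ℤ) ⧸ LinearMap.range B) + 2 * minGen (N ⧸ M) := by
  -- The statement's `ℤ`-module structures, e.g. `AddCommGroup.toIntModule ↥M`, are not the ones
  -- the lemmas above are stated with (`M.module`); they agree as `Module ℤ _` is a subsingleton.
  have hN : AddGroup.FG N := by
    obtain rfl : ‹Module ℤ N› = AddCommGroup.toIntModule N := Subsingleton.elim _ _
    exact Module.Finite.iff_addGroup_fg.mp ‹_›
  have hM : AddCommGroup.toIntModule ↥M = M.module := Subsingleton.elim _ _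
  revert BM
  rw [hM]
  exact minGen_discriminant_le B M

/-- For a non-degenerate even lattice `M` and an overlattice `N` of `M`,
one has `l(A_N) ≥ l(A_M) − 2·l(N/M)`, where `l` is the minimal number of generators.
Here `M` is realized as a finite-index submodule of `N` with the restricted form `BM`,
and discriminant groups as duals modulo the image of the form. -/
theorem stmt_7 (N : Type) [AddCommGroup N] [Module ℤ N]
    [Module.Free ℤ N] [Module.Finite ℤ N]
    (B : N →ₗ[ℤ] N →ₗ[ℤ] ℤ)
    (hsymm : ∀ x y, B x y = B y x)
    (hnd : ∀ x, (∀ y, B x y = 0) → x = 0)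
    (heven : ∀ x, 2 ∣ B x x)
    (M : Submodule ℤ N)
    (hfin : Finite (N ⧸ M))
    (BM : ↥M →ₗ[ℤ] ↥M →ₗ[ℤ] ℤ)
    (hBM : ∀ x y : ↥M, BM x y = B x y) :
    minGen ((↥M →ₗ[ℤ] ℤ) ⧸ LinearMap.range BM) ≤
      minGen ((N →ₗ[ℤ] ℤ) ⧸ LinearMap.range B) + 2 * minGen (N ⧸ M) :=
  stmt_7_general N B M BM hBM
end

section
/- Let L be an even unimodular lattice and S a primitive 2-elementary sublattice of L with orthogonal complement K = S^⊥, and suppose there exists an isometry of L acting as −1 on S and as +1 on K. Then this isometry α is an involution with L_α = S. Conversely, if there is an involution α of L with L_α ≅ S, then S admits a primitive embedding into L. -/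
/-- Lemma 3.1: Let `L` be an even unimodular lattice and `S` a
2-elementary lattice, primitively embedded in `L` via `i`, with orthogonal
complement `K`.  (1) If an isometry `α` of `L` acts as `−1` on `S` and as `+1` on
`K`, then `α` is an involution with anti-invariant lattice `L_α = i(S)`.
(2) Conversely, if some isometric involution `α` of `L` has `L_α ≅ S`, then `S`
admits a primitive embedding into `L`. -/
theorem stmt_10 (L : Type) [AddCommGroup L] [Module ℤ L]
    [Module.Free ℤ L] [Module.Finite ℤ L]
    (B : L →ₗ[ℤ] L →ₗ[ℤ] ℤ)
    (hsymm : ∀ x y, B x y = B y x)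
    (heven : ∀ x, 2 ∣ B x x)
    (hunimodular : Function.Bijective (fun x : L => (B x : Module.Dual ℤ L)))
    (S : Type) [AddCommGroup S] [Module ℤ S] [Module.Free ℤ S] [Module.Finite ℤ S]
    (BS : S →ₗ[ℤ] S →ₗ[ℤ] ℤ)
    (hBSsymm : ∀ x y, BS x y = BS y x)
    (hBSnd : ∀ x, (∀ y, BS x y = 0) → x = 0)
    (h2elem : ∀ a : (S →ₗ[ℤ] ℤ) ⧸ LinearMap.range BS, 2 • a = 0) :
    -- (1)
    ((∀ (i : S →ₗ[ℤ] L), Function.Injective i →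
        (∀ x y, B (i x) (i y) = BS x y) →
        (∀ (n : ℤ) (y : L ⧸ LinearMap.range i), n ≠ 0 → n • y = 0 → y = 0) →
        ∀ α : L ≃ₗ[ℤ] L, (∀ x y, B (α x) (α y) = B x y) →
          (∀ s, α (i s) = -(i s)) →
          (∀ y, (∀ s, B (i s) y = 0) → α y = y) →
          (∀ x, α (α x) = x) ∧ (∀ x, α x = -x ↔ x ∈ LinearMap.range i)) ∧
    -- (2)
    (∀ α : L ≃ₗ[ℤ] L, (∀ x y, B (α x) (α y) = B x y) → (∀ x, α (α x) = x) →
        (∃ e : S →ₗ[ℤ] L, Function.Injective e ∧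
            (∀ x y, B (e x) (e y) = BS x y) ∧
            (∀ s, α (e s) = -(e s)) ∧ (∀ y, α y = -y → y ∈ LinearMap.range e)) →
        ∃ j : S →ₗ[ℤ] L, Function.Injective j ∧
          (∀ x y, B (j x) (j y) = BS x y) ∧
          (∀ (n : ℤ) (y : L ⧸ LinearMap.range j), n ≠ 0 → n • y = 0 → y = 0))) := by
  -- torsion-freeness of L
  have htorsion : ∀ (n : ℤ) (a : L), n ≠ 0 → n • a = 0 → a = 0 := by
    intro n a hn ha
    let b := Module.Free.chooseBasis ℤ L
    have h0 : b.repr a = 0 := by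
      ext j
      have h1 := congrArg (fun y : L => b.repr y j) ha
      simp only [map_zsmul, Finsupp.smul_apply, map_zero, Finsupp.coe_zero,
        Pi.zero_apply, zsmul_eq_mul, Int.cast_id] at h1
      rcases mul_eq_zero.mp h1 with h | h
      · exact absurd h hn
      · simpa using h
    have h2 := congrArg b.repr.symm h0
    simpa using h2
  have htf : ∀ a : L, a + a = 0 → a = 0 := by
    intro a ha
    refine htorsion 2 a (by norm_num) ?_
    rw [two_zsmul]; exact ha
  constructor
  · -- Part (1)
    intro i hinj hBi hprim α hiso hanti hfix
    -- Key decomposition: for every x, x + x - i s is orthogonal to i(S) for some s.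
    have key : ∀ x : L, ∃ s : S, ∀ t : S, B (i t) (x + x - i s) = 0 := by
      intro x
      set f : S →ₗ[ℤ] ℤ := (B.flip x).comp i with hf
      have h2f : f + f ∈ LinearMap.range BS := by
        have h := h2elem (Submodule.Quotient.mk f)
        rw [two_smul] at h
        rw [← Submodule.Quotient.mk_add, Submodule.Quotient.mk_eq_zero] at h
        exact h
      obtain ⟨s, hs⟩ := h2f
      refine ⟨s, fun t => ?_⟩
      have hst : BS s t = B (i t) x + B (i t) x := by
        have := congrArg (fun g : S →ₗ[ℤ] ℤ => g t) hs
        simpa [f] using this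
      have h1 : B (i t) (x + x - i s) = B (i t) x + B (i t) x - BS t s := by
        simp [map_sub, map_add, hBi]
      rw [h1, hBSsymm t s, hst]
      ring
    have hαkey : ∀ x : L, ∃ s : S, α (x + x) = -(i s) + (x + x - i s) ∧
        α (x + x - i s) = x + x - i s := by
      intro x
      obtain ⟨s, hs⟩ := key x
      have hk : α (x + x - i s) = x + x - i s := hfix _ hs
      refine ⟨s, ?_, hk⟩
      have hdecomp : x + x = i s + (x + x - i s) := by abel
      calc α (x + x) = α (i s + (x + x - i s)) := by rw [← hdecomp]
        _ = α (i s) + α (x + x - i s) := map_add _ _ _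
        _ = -(i s) + (x + x - i s) := by rw [hanti, hk]
    constructor
    · intro x
      obtain ⟨s, hα, hk⟩ := hαkey x
      have h2 : α (α (x + x)) = x + x := by
        rw [hα, map_add, map_neg, hanti, hk]
        abel
      have h2' : α (α x) + α (α x) = x + x := by
        rw [← map_add, ← map_add]; exact h2
      have h3 : (α (α x) - x) + (α (α x) - x) = 0 := by
        rw [sub_add_sub_comm, h2', sub_self]
      exact sub_eq_zero.mp (htf _ h3)
    · intro x
      constructor
      · intro hx
        obtain ⟨s, hα, hk⟩ := hαkey x
        have hα2 : α (x + x) = -x + -x := by rw [map_add, hx]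
        have hkk : (x + x - i s) + (x + x - i s) = 0 := by
          have heq : -(i s) + (x + x - i s) = -x + -x := by rw [← hα, hα2]
          have heq2 : -x + -x = -(i s) - (x + x - i s) := by abel
          rw [heq2] at heq
          have : (x + x - i s) + (x + x - i s)
              = (-(i s) + (x + x - i s)) - (-(i s) - (x + x - i s)) := by abel
          rw [this, heq, sub_self]
        have hk0 : x + x - i s = 0 := htf _ hkk
        have h2x : x + x = i s := by rw [sub_eq_zero] at hk0; exact hk0
        have hq : (2:ℤ) • (Submodule.Quotient.mk x : L ⧸ LinearMap.range i) = 0 := by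
          rw [two_zsmul, ← Submodule.Quotient.mk_add, Submodule.Quotient.mk_eq_zero, h2x]
          exact ⟨s, rfl⟩
        have := hprim 2 (Submodule.Quotient.mk x) (by norm_num) hq
        rwa [Submodule.Quotient.mk_eq_zero] at this
      · rintro ⟨s, rfl⟩
        exact hanti s
  · -- Part (2)
    intro α hiso hinv ⟨e, heinj, hBe, hanti, hrange⟩
    refine ⟨e, heinj, hBe, ?_⟩
    intro n y hn hny
    obtain ⟨x, rfl⟩ := Submodule.Quotient.mk_surjective _ y
    have hny' : (Submodule.Quotient.mk (n • x) : L ⧸ LinearMap.range e) = 0 := by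
      rw [← hny]
      exact (Submodule.Quotient.mk_smul _ n x)
    rw [Submodule.Quotient.mk_eq_zero] at hny'
    obtain ⟨s, hs⟩ := hny'
    rw [Submodule.Quotient.mk_eq_zero]
    apply hrange
    have hαnx : α (n • x) = -(n • x) := by rw [← hs, hanti, hs]
    have hαnx' : n • α x = -(n • x) := by rw [← map_zsmul α n x]; exact hαnx
    have hn2 : n • (α x + x) = 0 := by
      rw [zsmul_add, hαnx']; abel
    exact eq_neg_of_add_eq_zero_left (htorsion n _ hn hn2)
end

section
/- The discriminant quadratic form of D₄(2) is v ⊕ v(4), where v is the discriminant form of D₄ (on (ℤ/2ℤ)² with q(e)=q(f)=1, b(e,f)=1/2) and v(4) is the form on (ℤ/4ℤ)² with Gram matrix [[1/2, 1/4],[1/4, 1/2]] (values of q being 1/2 on generators, bilinear value 1/4). -/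
open Matrix

def D4G : Matrix (Fin 4) (Fin 4) ℤ :=
  !![-2,  1,  1,  1;
      1, -2,  0,  0;
      1,  0, -2,  0;
      1,  0,  0, -2]

/-- The ℚ-valued bilinear form of `D₄(2)`, on `ℚ⁴ = D₄(2) ⊗ ℚ`. -/
def B4Q (x y : Fin 4 → ℚ) : ℚ :=
  2 * (x ⬝ᵥ (D4G.map (fun a : ℤ => (a : ℚ))).mulVec y)

/-- The quadratic form `v` (the discriminant form of `D₄`) on `(ℤ/2ℤ)²`, with
values in `ℚ` (read modulo `2ℤ`): `q(e) = q(f) = 1`, `b(e,f) = 1/2`, i.e.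
`q(a,b) = a + b + ab`. -/
def vq (w : Fin 2 → ZMod 2) : ℚ :=
  (((w 0).val + (w 1).val + (w 0).val * (w 1).val : ℕ) : ℚ)

/-- The quadratic form `v(4)` on `(ℤ/4ℤ)²` with Gram matrix
`[[1/2, 1/4], [1/4, 1/2]]` (read modulo `2ℤ`):
`q(x,y) = (x² + y² + xy)/2`. -/
def v4q (w : Fin 2 → ZMod 4) : ℚ :=
  (((w 0).val ^ 2 + (w 1).val ^ 2 + (w 0).val * (w 1).val : ℕ) : ℚ) / 2

/-!
Write `L = D₄(2) = ℤ⁴` in the root basis. The vectors `s₀ = (1/2, 0, 0, 0)`, `s₁ = (0, 1/2, 0, 0)`,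
`s₂ = (0, 1/2, 1/4, 1/4)`, `s₃ = (1/2, -1/4, 0, 1/4)` form a ℤ-basis of `L*`, and `2s₀, 2s₁, 4s₂, 4s₃`
form a ℤ-basis of `L` (an explicit Smith normal form of the Gram matrix). Hence `c ↦ ∑ cᵢ sᵢ`
induces `L*/L ≅ (ℤ/2)² × (ℤ/4)²`. The Gram matrix of the `sᵢ` agrees with that of `v ⊕ v(4)`
modulo `2` on the diagonal and modulo `1` off it, so `(x, x) ≡ c₀² + c₁² + c₀c₁ + (c₂² + c₃² + c₂c₃)/2`
modulo `2ℤ`.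
-/

theorem LinearMap.exists_quotEquiv_range_of_ker_eq {R M N P : Type*} [Ring R] [AddCommGroup M]
    [AddCommGroup N] [AddCommGroup P] [Module R M] [Module R N] [Module R P]
    {β : N →ₗ[R] M} (hβ : Function.Injective β) (L : Submodule R M) {f : N →ₗ[R] P}
    (hf : Function.Surjective f) (hker : LinearMap.ker f = L.comap β) :
    ∃ φ : (LinearMap.range β ⧸ L.comap (LinearMap.range β).subtype) ≃ₗ[R] P,
      ∀ c, φ (Submodule.Quotient.mk ⟨β c, LinearMap.mem_range_self β c⟩) = f c := by
  set e := LinearEquiv.ofInjective β hβ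
  set g := f ∘ₗ e.symm.toLinearMap
  have hg : Function.Surjective g := hf.comp e.symm.surjective
  have hker_g : L.comap (LinearMap.range β).subtype = LinearMap.ker g := by
    ext x
    rw [LinearMap.mem_ker, Submodule.mem_comap, LinearMap.comp_apply, ← LinearMap.mem_ker, hker,
      Submodule.mem_comap, LinearEquiv.coe_coe, LinearEquiv.ofInjective_symm_apply,
      Submodule.subtype_apply]
  refine ⟨(Submodule.quotEquivOfEq _ _ hker_g).trans (g.quotKerEquivOfSurjective hg), fun c => ?_⟩
  simp only [LinearEquiv.trans_apply, Submodule.quotEquivOfEq_mk,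
    LinearMap.quotKerEquivOfSurjective_apply_mk, g, LinearMap.comp_apply, LinearEquiv.coe_coe]
  exact congrArg f (e.symm_apply_apply c)

theorem B4Q_apply (x y : Fin 4 → ℚ) :
    B4Q x y = 2 * (x 0 * (-2 * y 0 + y 1 + y 2 + y 3) + x 1 * (y 0 - 2 * y 1)
      + x 2 * (y 0 - 2 * y 2) + x 3 * (y 0 - 2 * y 3)) := by
  simp only [B4Q, D4G, dotProduct, mulVec, Fin.sum_univ_four, map_apply, of_apply, cons_val',
    cons_val_zero, cons_val_one, cons_val, cons_val_fin_one]
  push_cast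
  ring

theorem exists_intCast_div_four_eq_iff (a : ℤ) : (∃ n : ℤ, (a : ℚ) / 4 = n) ↔ 4 ∣ a := by
  constructor
  · rintro ⟨n, hn⟩
    exact ⟨n, by rw [div_eq_iff four_ne_zero] at hn; exact_mod_cast hn.trans (mul_comm _ _)⟩
  · rintro ⟨n, rfl⟩
    exact ⟨n, by push_cast; ring⟩

theorem exists_vq_intCast_eq (a b : ℤ) :
    ∃ n : ℤ, vq ![(a : ZMod 2), b] = a ^ 2 + b ^ 2 + a * b + 2 * n := by
  obtain ⟨n, hn⟩ : ((2 : ℕ) : ℤ) ∣ ((a : ZMod 2).val + (b : ZMod 2).val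
      + (a : ZMod 2).val * (b : ZMod 2).val : ℕ) - (a ^ 2 + b ^ 2 + a * b) := by
    rw [← ZMod.intCast_zmod_eq_zero_iff_dvd]
    push_cast [ZMod.natCast_zmod_val, ZMod.pow_card]
    ring
  refine ⟨n, ?_⟩
  have hn' := congrArg (Int.cast : ℤ → ℚ) hn
  push_cast at hn'
  simp only [vq, Matrix.cons_val_zero, Matrix.cons_val_one]
  push_cast
  linarith

theorem exists_v4q_intCast_eq (a b : ℤ) :
    ∃ n : ℤ, v4q ![(a : ZMod 4), b] = (a ^ 2 + b ^ 2 + a * b) / 2 + 2 * n := by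
  obtain ⟨n, hn⟩ : ((4 : ℕ) : ℤ) ∣ ((a : ZMod 4).val ^ 2 + (b : ZMod 4).val ^ 2
      + (a : ZMod 4).val * (b : ZMod 4).val : ℕ) - (a ^ 2 + b ^ 2 + a * b) := by
    rw [← ZMod.intCast_zmod_eq_zero_iff_dvd]
    push_cast [ZMod.natCast_zmod_val]
    ring
  refine ⟨n, ?_⟩
  have hn' := congrArg (Int.cast : ℤ → ℚ) hn
  push_cast at hn'
  simp only [v4q, Matrix.cons_val_zero, Matrix.cons_val_one]
  push_cast
  linarith

namespace D4Two

def dualEmbed : (Fin 4 → ℤ) →ₗ[ℤ] (Fin 4 → ℚ) where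
  toFun c := ![((2 * c 0 + 2 * c 3 : ℤ) : ℚ) / 4, ((2 * c 1 + 2 * c 2 - c 3 : ℤ) : ℚ) / 4,
    (c 2 : ℚ) / 4, ((c 2 + c 3 : ℤ) : ℚ) / 4]
  map_add' c d := by
    ext i; fin_cases i <;>
      simp only [Pi.add_apply, Fin.zero_eta, Fin.mk_one, Fin.reduceFinMk, cons_val_zero,
        cons_val_one, cons_val] <;>
      push_cast <;> ring
  map_smul' k c := by
    ext i; fin_cases i <;>
      simp only [Pi.smul_apply, zsmul_eq_mul, eq_intCast, Fin.zero_eta, Fin.mk_one,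
        Fin.reduceFinMk, cons_val_zero, cons_val_one, cons_val] <;>
      push_cast <;> ring

theorem dualEmbed_injective : Function.Injective dualEmbed := by
  rw [← LinearMap.ker_eq_bot, LinearMap.ker_eq_bot']
  intro c hc
  have h i := congrFun hc i
  have h0 := h 0; have h1 := h 1; have h2 := h 2; have h3 := h 3
  simp only [dualEmbed, LinearMap.coe_mk, AddHom.coe_mk, cons_val_zero, cons_val_one, cons_val,
    Pi.zero_apply, div_eq_zero_iff, four_ne_zero, or_false] at h0 h1 h2 h3
  push_cast at h0 h1
  qify at h2 h3
  ext i; fin_cases i <;> simp only [Fin.zero_eta, Fin.mk_one, Fin.reduceFinMk, Pi.zero_apply] <;>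
    qify <;> linarith

theorem exists_B4Q_dualEmbed_intCast (c d : Fin 4 → ℤ) :
    ∃ n : ℤ, B4Q (dualEmbed c) (fun i => (d i : ℚ)) = n :=
  ⟨c 0 * (-2 * d 0 + d 1 + d 2 + d 3) + c 1 * (d 0 - 2 * d 1)
    + c 2 * (2 * d 0 - 2 * d 1 - d 2 - d 3) + c 3 * (-2 * d 0 + 2 * d 1 + d 2), by
    simp only [B4Q_apply, dualEmbed, LinearMap.coe_mk, AddHom.coe_mk, cons_val_zero, cons_val_one,
      cons_val]
    push_cast; ring⟩

theorem mem_range_dualEmbed_of_B4Q_single (x : Fin 4 → ℚ)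
    (hx : ∀ j, ∃ n : ℤ, B4Q x (Pi.single j 1) = n) : x ∈ LinearMap.range dualEmbed := by
  choose n hn using hx
  have h0 := hn 0; have h1 := hn 1; have h2 := hn 2; have h3 := hn 3
  simp only [B4Q_apply, Pi.single_apply, Fin.reduceEq, ↓reduceIte] at h0 h1 h2 h3
  -- the coordinates of `x` in the basis `sᵢ`, as integral combinations of the `(x, eⱼ)`
  refine ⟨![-2 * n 0 - n 1 - 2 * n 2, n 0 + 2 * n 2, -2 * n 0 - n 1 - 2 * n 2 - n 3, n 2 - n 3], ?_⟩
  ext i; fin_cases i <;>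
    simp only [dualEmbed, LinearMap.coe_mk, AddHom.coe_mk, cons_val_zero, cons_val_one, cons_val] <;>
    push_cast <;> linarith

theorem range_dualEmbed_eq {Lint Ldual : Submodule ℤ (Fin 4 → ℚ)}
    (hLint : ∀ x, x ∈ Lint ↔ ∀ i, ∃ n : ℤ, x i = n)
    (hLdual : ∀ x, x ∈ Ldual ↔ ∀ y ∈ Lint, ∃ n : ℤ, B4Q x y = n) :
    Ldual = LinearMap.range dualEmbed := by
  ext x
  rw [hLdual]
  constructor
  · intro hx
    refine mem_range_dualEmbed_of_B4Q_single x fun j => hx _ ((hLint _).2 fun i => ?_)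
    exact ⟨(Pi.single j 1 : Fin 4 → ℤ) i, by by_cases h : i = j <;> simp [h]⟩
  · rintro ⟨c, rfl⟩ y hy
    choose d hd using (hLint y).1 hy
    obtain rfl : y = fun i => (d i : ℚ) := funext hd
    exact exists_B4Q_dualEmbed_intCast c d

theorem dualEmbed_isIntegral_iff (c : Fin 4 → ℤ) :
    (∀ i, ∃ n : ℤ, dualEmbed c i = n) ↔ 2 ∣ c 0 ∧ 2 ∣ c 1 ∧ 4 ∣ c 2 ∧ 4 ∣ c 3 := by
  simp only [Fin.forall_fin_succ, IsEmpty.forall_iff, and_true, dualEmbed, LinearMap.coe_mk,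
    AddHom.coe_mk, Matrix.cons_val_zero, Matrix.cons_val_succ, exists_intCast_div_four_eq_iff]
  omega

def reduction : (Fin 4 → ℤ) →ₗ[ℤ] (Fin 2 → ZMod 2) × (Fin 2 → ZMod 4) where
  toFun c := (![(c 0 : ZMod 2), c 1], ![(c 2 : ZMod 4), c 3])
  map_add' c d := by ext i <;> fin_cases i <;> simp
  map_smul' k c := by ext i <;> fin_cases i <;> simp

theorem reduction_surjective : Function.Surjective reduction := by
  rintro ⟨a, b⟩
  refine ⟨![(a 0).cast, (a 1).cast, (b 0).cast, (b 1).cast], ?_⟩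
  ext i <;> fin_cases i <;> simp [reduction]

theorem reduction_eq_zero_iff (c : Fin 4 → ℤ) :
    reduction c = 0 ↔ 2 ∣ c 0 ∧ 2 ∣ c 1 ∧ 4 ∣ c 2 ∧ 4 ∣ c 3 := by
  simp [reduction, Prod.ext_iff, funext_iff, Fin.forall_fin_two, ZMod.intCast_zmod_eq_zero_iff_dvd,
    and_assoc]

theorem ker_reduction_eq_comap_dualEmbed {Lint : Submodule ℤ (Fin 4 → ℚ)}
    (hLint : ∀ x, x ∈ Lint ↔ ∀ i, ∃ n : ℤ, x i = n) :
    LinearMap.ker reduction = Lint.comap dualEmbed := by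
  ext c
  rw [LinearMap.mem_ker, Submodule.mem_comap, hLint, reduction_eq_zero_iff,
    dualEmbed_isIntegral_iff]

theorem B4Q_dualEmbed_self (c : Fin 4 → ℤ) :
    B4Q (dualEmbed c) (dualEmbed c) = -c 0 ^ 2 - c 1 ^ 2 - 3 / 2 * (c 2 : ℚ) ^ 2
      - 3 / 2 * (c 3 : ℚ) ^ 2 + c 0 * c 1 + 2 * c 0 * c 2 - 2 * c 0 * c 3 - 2 * c 1 * c 2
      + 2 * c 1 * c 3 + 5 / 2 * (c 2 : ℚ) * c 3 := by
  simp only [B4Q_apply, dualEmbed, LinearMap.coe_mk, AddHom.coe_mk, cons_val_zero, cons_val_one,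
    cons_val]
  push_cast
  ring

theorem exists_B4Q_dualEmbed_self_eq (c : Fin 4 → ℤ) :
    ∃ n : ℤ, B4Q (dualEmbed c) (dualEmbed c) = vq (reduction c).1 + v4q (reduction c).2 + 2 * n := by
  obtain ⟨n₁, h₁⟩ := exists_vq_intCast_eq (c 0) (c 1)
  obtain ⟨n₂, h₂⟩ := exists_v4q_intCast_eq (c 2) (c 3)
  refine ⟨-c 0 ^ 2 - c 1 ^ 2 - c 2 ^ 2 - c 3 ^ 2 + c 0 * c 2 - c 0 * c 3 - c 1 * c 2
        + c 1 * c 3 + c 2 * c 3 - n₁ - n₂, ?_⟩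
  simp only [reduction, LinearMap.coe_mk, AddHom.coe_mk, h₁, h₂, B4Q_dualEmbed_self]
  push_cast
  ring

end D4Two

theorem stmt_15_general
    (Lint Ldual : Submodule ℤ (Fin 4 → ℚ))
    (hLint : ∀ x, x ∈ Lint ↔ ∀ i, ∃ n : ℤ, x i = n)
    (hLdual : ∀ x, x ∈ Ldual ↔ ∀ y ∈ Lint, ∃ n : ℤ, B4Q x y = n) :
    ∃ φ : (↥Ldual ⧸ Submodule.comap Ldual.subtype Lint) ≃+
        ((Fin 2 → ZMod 2) × (Fin 2 → ZMod 4)),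
      ∀ x : ↥Ldual, ∃ n : ℤ,
        B4Q (x : Fin 4 → ℚ) (x : Fin 4 → ℚ) =
          vq (φ (Submodule.Quotient.mk x)).1 +
          v4q (φ (Submodule.Quotient.mk x)).2 + 2 * n := by
  open D4Two in
  obtain rfl := range_dualEmbed_eq hLint hLdual
  obtain ⟨φ, hφ⟩ := LinearMap.exists_quotEquiv_range_of_ker_eq dualEmbed_injective Lint
    reduction_surjective (ker_reduction_eq_comap_dualEmbed hLint)
  refine ⟨φ.toAddEquiv, ?_⟩
  rintro ⟨_, c, rfl⟩
  exact hφ c ▸ exists_B4Q_dualEmbed_self_eq c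

/-- The discriminant quadratic form of `D₄(2)` is `v ⊕ v(4)`: the
discriminant group `A = L*/L` of `L = D₄(2)` is isomorphic to `(ℤ/2ℤ)² × (ℤ/4ℤ)²`
via an isomorphism carrying the discriminant quadratic form `q(x) = (x,x) mod 2ℤ`
to the form `v ⊕ v(4)`. -/
theorem stmt_15
    (Lint Ldual : Submodule ℤ (Fin 4 → ℚ))
    (hLint : ∀ x, x ∈ Lint ↔ ∀ i, ∃ n : ℤ, x i = n)
    (hLdual : ∀ x, x ∈ Ldual ↔ ∀ y ∈ Lint, ∃ n : ℤ, B4Q x y = n)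
    (hle : Lint ≤ Ldual) :
    ∃ φ : (↥Ldual ⧸ Submodule.comap Ldual.subtype Lint) ≃+
        ((Fin 2 → ZMod 2) × (Fin 2 → ZMod 4)),
      ∀ x : ↥Ldual, ∃ n : ℤ,
        B4Q (x : Fin 4 → ℚ) (x : Fin 4 → ℚ) =
          vq (φ (Submodule.Quotient.mk x)).1 +
          v4q (φ (Submodule.Quotient.mk x)).2 + 2 * n :=
  stmt_15_general Lint Ldual hLint hLdual
end
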